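/- In U_q(sl_2), the element exp_{q²}(t e) conjugation/commutation with a vector-representation intertwiner component: if Φ_+, Φ_− are linear maps between U_q(sl_2)-modules forming the components of an intertwiner Φ : V⊗W → V' (W two-dimensional with e w_− = w_+, f w_+ = w_−, k w_± = q^{±1}w_±), so that x∘Φ_W = Φ_W∘Δ(x) for all x, then exp_{q²}(t e)∘Φ_+ = Φ_+∘exp_{q²}(t e) and exp_{q²}(t e)∘Φ_− = (t·Φ_+∘k^{-1} + Φ_−)∘exp_{q²}(t e), as identities of formal power series in t. -/

import Mathlib

open TensorProduct

/-- The `q`-integer `(n)_q`. -/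
def qInt {K : Type*} [Field K] (q : K) (n : ℕ) : K := ∑ i ∈ Finset.range n, q ^ i

/-- The `q`-factorial `(n)_q!`. -/
def qFact {K : Type*} [Field K] (q : K) (n : ℕ) : K := ∏ j ∈ Finset.range n, qInt q (j + 1)

/-
Applying the intertwining property to `e` and using `Δ(e) = e ⊗ 1 + k⁻¹ ⊗ e` gives
`e Φ₊ = Φ₊ e` and `e Φ₋ = Φ₋ e + Φ₊ k⁻¹`, while `k e = q² e k` gives `e (Φ₊ k⁻¹) = q² (Φ₊ k⁻¹) e`.
Iterating, `eⁿ⁺¹ Φ₋ = Φ₋ eⁿ⁺¹ + (n+1)_{q²} Φ₊ k⁻¹ eⁿ`, and dividing by `(n+1)_{q²}!` turns the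
`q`-integer into the shift of the `q`-factorial, which is the factor `t` in the claimed identity.
-/

theorem qInt_succ' {K : Type*} [Field K] (q : K) (n : ℕ) :
    qInt q (n + 1) = 1 + q * qInt q n := by
  simp only [qInt, Finset.sum_range_succ', Finset.mul_sum, pow_succ', pow_zero]
  ring

theorem qFact_succ {K : Type*} [Field K] (q : K) (n : ℕ) :
    qFact q (n + 1) = qFact q n * qInt q (n + 1) :=
  Finset.prod_range_succ _ _

theorem inv_qFact_succ_mul_qInt {K : Type*} [Field K] {q : K} {n : ℕ}
    (h : qFact q (n + 1) ≠ 0) : (qFact q (n + 1))⁻¹ * qInt q (n + 1) = (qFact q n)⁻¹ := by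
  rw [qFact_succ] at h ⊢
  rw [mul_inv, mul_assoc, inv_mul_cancel₀ (right_ne_zero_of_mul h), mul_one]

theorem mul_inv_eq_smul_of_mul_eq_smul {K A : Type*} [CommSemiring K] [Semiring A] [Algebra K A]
    {c : K} {e k kinv : A} (hk : k * kinv = 1) (hk' : kinv * k = 1)
    (hke : k * e = c • (e * k)) : e * kinv = c • (kinv * e) :=
  calc e * kinv = kinv * (k * e) * kinv := by rw [← mul_assoc, hk', one_mul]
  _ = c • (kinv * e * (k * kinv)) := by rw [hke, mul_smul_comm, smul_mul_assoc]; noncomm_ring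
  _ = c • (kinv * e) := by rw [hk, mul_one]

section TwistedCommutator

variable {K M M' : Type*} [Field K] [AddCommGroup M] [Module K M] [AddCommGroup M'] [Module K M']
  {E : Module.End K M} {E' : Module.End K M'} {P N : M →ₗ[K] M'} {c : K}

theorem pow_succ_comp_eq_of_comp_eq_add (hP : E' ∘ₗ P = P ∘ₗ E + N)
    (hN : E' ∘ₗ N = c • (N ∘ₗ E)) (n : ℕ) :
    (E' ^ (n + 1)) ∘ₗ P = P ∘ₗ (E ^ (n + 1)) + qInt c (n + 1) • (N ∘ₗ (E ^ n)) := by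
  induction n with
  | zero => simp [hP, qInt, Module.End.one_eq_id]
  | succ n ih =>
    have hNpow : E' ∘ₗ (N ∘ₗ E ^ n) = c • (N ∘ₗ E ^ (n + 1)) := by
      rw [← LinearMap.comp_assoc, hN, LinearMap.smul_comp, LinearMap.comp_assoc,
        ← Module.End.mul_eq_comp, ← pow_succ']
    rw [pow_succ' E', Module.End.mul_eq_comp, LinearMap.comp_assoc, ih, LinearMap.comp_add,
      LinearMap.comp_smul, hNpow, ← LinearMap.comp_assoc, hP, LinearMap.add_comp,
      LinearMap.comp_assoc, ← Module.End.mul_eq_comp E, ← pow_succ', qInt_succ' c (n + 1)]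
    module

theorem inv_qFact_smul_pow_succ_comp {n : ℕ} (hc : qFact c (n + 1) ≠ 0)
    (hP : E' ∘ₗ P = P ∘ₗ E + N) (hN : E' ∘ₗ N = c • (N ∘ₗ E)) :
    (qFact c (n + 1))⁻¹ • ((E' ^ (n + 1)) ∘ₗ P) =
      (qFact c (n + 1))⁻¹ • (P ∘ₗ (E ^ (n + 1))) + (qFact c n)⁻¹ • (N ∘ₗ (E ^ n)) := by
  rw [pow_succ_comp_eq_of_comp_eq_add hP hN, smul_add, smul_smul, inv_qFact_succ_mul_qInt hc]

end TwistedCommutator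

theorem intertwiner_apply_tmul {K A V V' W : Type*} [Field K] [Ring A] [Algebra K A]
    [AddCommGroup V] [Module K V] [AddCommGroup V'] [Module K V'] [AddCommGroup W] [Module K W]
    {e kinv : A} {Δ : A →ₐ[K] A ⊗[K] A} (hΔe : Δ e = e ⊗ₜ[K] 1 + kinv ⊗ₜ[K] e)
    {ρ : A →ₐ[K] Module.End K V} {ρ' : A →ₐ[K] Module.End K V'} {ρW : A →ₐ[K] Module.End K W}
    {Φ : V ⊗[K] W →ₗ[K] V'}
    (hΦ : ∀ (x : A) (t : V ⊗[K] W),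
      ρ' x (Φ t) = Φ ((Module.endTensorEndAlgHom.comp (Algebra.TensorProduct.map ρ ρW)) (Δ x) t))
    (v : V) (w : W) :
    ρ' e (Φ (v ⊗ₜ w)) = Φ (ρ e v ⊗ₜ w) + Φ (ρ kinv v ⊗ₜ ρW e w) := by
  simp [hΦ, hΔe, Module.endTensorEndAlgHom_apply]

theorem qExp_e_commutes_with_vertex_components
    {K : Type*} [Field K] {A : Type*} [Ring A] [Algebra K A]
    (q : K) (hq : ∀ n : ℕ, qFact (q ^ 2) n ≠ 0)
    (e k kinv : A)
    (hk : k * kinv = 1) (hk' : kinv * k = 1)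
    (hke : k * e = (q ^ 2) • (e * k))
    (Δ : A →ₐ[K] A ⊗[K] A)
    (hΔe : Δ e = e ⊗ₜ[K] 1 + kinv ⊗ₜ[K] e)
    {V V' : Type*} [AddCommGroup V] [Module K V] [AddCommGroup V'] [Module K V']
    (ρ : A →ₐ[K] Module.End K V) (ρ' : A →ₐ[K] Module.End K V')
    -- the two-dimensional module `W = K w₊ ⊕ K w₋`, realized as `K × K`
    (ρW : A →ₐ[K] Module.End K (K × K))
    (hρWe : ρW e = (LinearMap.snd K K K).prod 0)
    -- the intertwiner `Φ : V ⊗ W → V'`, satisfying `x ∘ Φ = Φ ∘ Δ(x)`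
    (Φ : V ⊗[K] (K × K) →ₗ[K] V')
    (hΦ : ∀ (x : A) (t : V ⊗[K] (K × K)),
      ρ' x (Φ t) =
        Φ ((Module.endTensorEndAlgHom.comp (Algebra.TensorProduct.map ρ ρW)) (Δ x) t))
    -- the components `Φ₊, Φ₋` of `Φ`
    (Φp Φm : V →ₗ[K] V')
    (hΦp : ∀ v : V, Φp v = Φ (v ⊗ₜ[K] ((1 : K), (0 : K))))
    (hΦm : ∀ v : V, Φm v = Φ (v ⊗ₜ[K] ((0 : K), (1 : K)))) :
    (PowerSeries.mk fun n => (qFact (q ^ 2) n)⁻¹ • ((ρ' e ^ n) ∘ₗ Φp)) =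
      (PowerSeries.mk fun n => (qFact (q ^ 2) n)⁻¹ • (Φp ∘ₗ (ρ e ^ n))) ∧
    (PowerSeries.mk fun n => (qFact (q ^ 2) n)⁻¹ • ((ρ' e ^ n) ∘ₗ Φm)) =
      (PowerSeries.mk fun n =>
        (qFact (q ^ 2) n)⁻¹ • (Φm ∘ₗ (ρ e ^ n)) +
          match n with
          | 0 => 0
          | Nat.succ m =>
              (qFact (q ^ 2) m)⁻¹ • ((Φp ∘ₗ (ρ kinv)) ∘ₗ (ρ e ^ m))) := by
  have hΦp_e : ρ' e ∘ₗ Φp = Φp ∘ₗ ρ e := by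
    ext v
    simp [hΦp, intertwiner_apply_tmul hΔe hΦ, hρWe, Prod.mk_zero_zero]
  have hΦm_e : ρ' e ∘ₗ Φm = Φm ∘ₗ ρ e + Φp ∘ₗ ρ kinv := by
    ext v
    simp [hΦp, hΦm, intertwiner_apply_tmul hΔe hΦ, hρWe]
  have he_kinv : ρ e ∘ₗ ρ kinv = q ^ 2 • (ρ kinv ∘ₗ ρ e) := by
    simpa [Module.End.mul_eq_comp] using congrArg ρ (mul_inv_eq_smul_of_mul_eq_smul hk hk' hke)
  have hΦp_kinv : ρ' e ∘ₗ (Φp ∘ₗ ρ kinv) = q ^ 2 • ((Φp ∘ₗ ρ kinv) ∘ₗ ρ e) := by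
    rw [← LinearMap.comp_assoc, hΦp_e, LinearMap.comp_assoc, he_kinv, LinearMap.comp_smul,
      LinearMap.comp_assoc]
  refine ⟨congrArg PowerSeries.mk (funext fun n => ?_),
    congrArg PowerSeries.mk (funext fun n => ?_)⟩
  · rw [Module.End.commute_pow_left_of_commute hΦp_e]
  · cases n with
    | zero => simp [Module.End.one_eq_id]
    | succ n => exact inv_qFact_smul_pow_succ_comp (hq (n + 1)) hΦm_e hΦp_kinv
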